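/- For all a, b, θ > 0, the function H(z) = τ(θ)z + log(z/(a+z)) + κ(θ)·log((a+b+z)/(a+z)), with κ(θ) = (1/θ² − 1/(a+θ)²)/(1/(a+θ)² − 1/(a+b+θ)²) and τ(θ) = a(a+b)/(θ²(2a+b+2θ)), satisfies H'(θ) = 0, H''(θ) = 0, and H'''(θ) > 0. -/

import Mathlib

/-- The slope parametrization `κ(θ)` for the Bernoulli-Exponential FPP model. -/
noncomputable def kappaFPP (a b θ : ℝ) : ℝ :=
  (1 / θ ^ 2 - 1 / (a + θ) ^ 2) / (1 / (a + θ) ^ 2 - 1 / (a + b + θ) ^ 2)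

/-- The time parametrization `τ(θ)` for the Bernoulli-Exponential FPP model. -/
noncomputable def tauFPP (a b θ : ℝ) : ℝ := a * (a + b) / (θ ^ 2 * (2 * a + b + 2 * θ))

/-- The steepest-descent function
`H(z) = τ(θ) z + log(z/(a+z)) + κ(θ) log((a+b+z)/(a+z))`. -/
noncomputable def HFPP (a b θ : ℝ) (z : ℝ) : ℝ :=
  tauFPP a b θ * z + Real.log (z / (a + z)) + kappaFPP a b θ * Real.log ((a + b + z) / (a + z))

/-! On `z > 0` the derivatives of `H` are rational. `κ(θ)` is by definition the ratio that makes
`H''(θ) = 0`; in closed form it is `a (a + 2θ) (a + b + θ)² / (θ² b (2a + b + 2θ))`, and `τ(θ)` is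
then exactly the value with `H'(θ) = 0`. Substituting the closed form gives
`H'''(θ) = 2a (a + b) (2a + b + 3θ) / (θ³ (a + θ) (a + b + θ) (2a + b + 2θ)) > 0`. -/
open Real Filter Topology

theorem iteratedDeriv_succ_eq_of_eventually_hasDerivAt {𝕜 F : Type*} [NontriviallyNormedField 𝕜]
    [NormedAddCommGroup F] [NormedSpace 𝕜 F] {f g : 𝕜 → F} {x : 𝕜}
    (h : ∀ᶠ y in 𝓝 x, HasDerivAt f (g y) y) (n : ℕ) :
    iteratedDeriv (n + 1) f x = iteratedDeriv n g x := by
  rw [iteratedDeriv_succ']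
  exact Filter.EventuallyEq.iteratedDeriv_eq n (h.mono fun y hy => hy.deriv)

theorem HasDerivAt.log_div {f g : ℝ → ℝ} {f' g' x : ℝ} (hf : HasDerivAt f f' x)
    (hg : HasDerivAt g g' x) (hfx : f x ≠ 0) (hgx : g x ≠ 0) :
    HasDerivAt (fun y => Real.log (f y / g y)) (f' / f x - g' / g x) x := by
  refine ((hf.div hg hgx).log (div_ne_zero hfx hgx)).congr_deriv ?_
  simp only [Pi.div_apply]
  field_simp

noncomputable def HFPPDeriv (a b t k z : ℝ) : ℝ :=
  t + z⁻¹ - (a + z)⁻¹ + k * ((a + b + z)⁻¹ - (a + z)⁻¹)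

noncomputable def HFPPDeriv2 (a b k z : ℝ) : ℝ :=
  ((a + z) ^ 2)⁻¹ - (z ^ 2)⁻¹ + k * (((a + z) ^ 2)⁻¹ - ((a + b + z) ^ 2)⁻¹)

noncomputable def HFPPDeriv3 (a b k z : ℝ) : ℝ :=
  2 * (z ^ 3)⁻¹ - 2 * ((a + z) ^ 3)⁻¹ + k * (2 * ((a + b + z) ^ 3)⁻¹ - 2 * ((a + z) ^ 3)⁻¹)

section Derivatives

variable {a b z : ℝ} (hz : z ≠ 0) (haz : a + z ≠ 0) (habz : a + b + z ≠ 0)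
include hz haz habz

theorem hasDerivAt_HFPP (θ : ℝ) :
    HasDerivAt (HFPP a b θ) (HFPPDeriv a b (tauFPP a b θ) (kappaFPP a b θ) z) z := by
  have hshift (c : ℝ) : HasDerivAt (fun y => c + y) 1 z := (hasDerivAt_id' z).const_add c
  refine (((hasDerivAt_id' z).const_mul (tauFPP a b θ)).add
      ((hasDerivAt_id' z).log_div (hshift a) hz haz)).add
      (((hshift (a + b)).log_div (hshift a) habz haz).const_mul (kappaFPP a b θ))
      |>.congr_deriv ?_
  simp only [HFPPDeriv]
  ring

theorem hasDerivAt_HFPPDeriv (t k : ℝ) :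
    HasDerivAt (HFPPDeriv a b t k) (HFPPDeriv2 a b k z) z := by
  have hshift (c : ℝ) : HasDerivAt (fun y => c + y) 1 z := (hasDerivAt_id' z).const_add c
  refine (((hasDerivAt_id' z).inv hz).const_add t |>.sub ((hshift a).inv haz)).add
      ((((hshift (a + b)).inv habz).sub ((hshift a).inv haz)).const_mul k) |>.congr_deriv ?_
  simp only [HFPPDeriv2]
  ring

theorem hasDerivAt_HFPPDeriv2 (k : ℝ) :
    HasDerivAt (HFPPDeriv2 a b k) (HFPPDeriv3 a b k z) z := by
  have hsq {f : ℝ → ℝ} (hf : HasDerivAt f 1 z) (hfz : f z ≠ 0) :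
      HasDerivAt (fun y => (f y ^ 2)⁻¹) (-(2 * (f z ^ 3)⁻¹)) z :=
    ((hf.pow 2).inv (pow_ne_zero 2 hfz)).congr_deriv <| by
      simp only [Pi.pow_apply]
      field_simp
      ring
  have hshift (c : ℝ) : HasDerivAt (fun y => c + y) 1 z := (hasDerivAt_id' z).const_add c
  refine ((hsq (hshift a) haz).sub (hsq (hasDerivAt_id' z) hz)).add
      (((hsq (hshift a) haz).sub (hsq (hshift (a + b)) habz)).const_mul k) |>.congr_deriv ?_
  simp only [HFPPDeriv3]
  ring

end Derivatives

section Evaluation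

variable {a b θ : ℝ} (ha : 0 < a) (hb : 0 < b) (hθ : 0 < θ)
include ha hb hθ

theorem kappaFPP_eq :
    kappaFPP a b θ = a * (a + 2 * θ) * (a + b + θ) ^ 2 / (θ ^ 2 * b * (2 * a + b + 2 * θ)) := by
  have hden : 1 / (a + θ) ^ 2 - 1 / (a + b + θ) ^ 2 ≠ 0 :=
    (sub_pos.2 (one_div_lt_one_div_of_lt (by positivity) (by gcongr; linarith))).ne'
  rw [kappaFPP, div_eq_div_iff hden (by positivity)]
  field_simp
  ring

theorem HFPPDeriv_tauFPP_kappaFPP_eq_zero :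
    HFPPDeriv a b (tauFPP a b θ) (kappaFPP a b θ) θ = 0 := by
  rw [HFPPDeriv, tauFPP, kappaFPP_eq ha hb hθ]
  field_simp
  ring

theorem HFPPDeriv2_kappaFPP_eq_zero : HFPPDeriv2 a b (kappaFPP a b θ) θ = 0 := by
  rw [HFPPDeriv2, kappaFPP_eq ha hb hθ]
  field_simp
  ring

theorem HFPPDeriv3_kappaFPP :
    HFPPDeriv3 a b (kappaFPP a b θ) θ =
      2 * a * (a + b) * (2 * a + b + 3 * θ) /
        (θ ^ 3 * (a + θ) * (a + b + θ) * (2 * a + b + 2 * θ)) := by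
  rw [HFPPDeriv3, kappaFPP_eq ha hb hθ]
  field_simp
  ring

end Evaluation

/-- `θ` is a double critical point of `H`, with positive third derivative. -/
theorem HFPP_critical_point (a b θ : ℝ) (ha : 0 < a) (hb : 0 < b) (hθ : 0 < θ) :
    deriv (HFPP a b θ) θ = 0 ∧ iteratedDeriv 2 (HFPP a b θ) θ = 0 ∧
      0 < iteratedDeriv 3 (HFPP a b θ) θ := by
  have hpos : ∀ᶠ z in 𝓝 θ, 0 < z := Ioi_mem_nhds hθ
  have hH : ∀ᶠ z in 𝓝 θ,
      HasDerivAt (HFPP a b θ) (HFPPDeriv a b (tauFPP a b θ) (kappaFPP a b θ) z) z :=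
    hpos.mono fun z hz => hasDerivAt_HFPP hz.ne' (by positivity) (by positivity) θ
  have hH' : ∀ᶠ z in 𝓝 θ,
      HasDerivAt (HFPPDeriv a b (tauFPP a b θ) (kappaFPP a b θ))
        (HFPPDeriv2 a b (kappaFPP a b θ) z) z :=
    hpos.mono fun z hz => hasDerivAt_HFPPDeriv hz.ne' (by positivity) (by positivity) _ _
  refine ⟨?_, ?_, ?_⟩
  · rw [hH.self_of_nhds.deriv, HFPPDeriv_tauFPP_kappaFPP_eq_zero ha hb hθ]
  · rw [iteratedDeriv_succ_eq_of_eventually_hasDerivAt hH, iteratedDeriv_one,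
      hH'.self_of_nhds.deriv, HFPPDeriv2_kappaFPP_eq_zero ha hb hθ]
  · rw [iteratedDeriv_succ_eq_of_eventually_hasDerivAt hH,
      iteratedDeriv_succ_eq_of_eventually_hasDerivAt hH', iteratedDeriv_one,
      (hasDerivAt_HFPPDeriv2 hθ.ne' (by positivity) (by positivity) _).deriv,
      HFPPDeriv3_kappaFPP ha hb hθ]
    positivity
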